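/- arXiv:2011.03211 — 2 statements merged into one kernel-verified Lean document; each statement's English description precedes it below -/
import Mathlib

section
/- Let f : G → ℝ be bounded, Borel measurable and nonnegative, and let φ ∈ C_00(G) be nonnegative and not identically zero. Then a function h : G → ℝ is G-dominated by φ*f if and only if h is measurably dominated by φ*f, i.e., if and only if there exists λ ∈ M_00(G)_+ with |h(x)| ≤ (λ*(φ*f))(x) for all x ∈ G. -/
open MeasureTheory Topology Pointwise
open scoped ENNReal

variable {G : Type*}

section Defs

variable [Group G] [TopologicalSpace G] [MeasurableSpace G]

/-- Convolution of a (positive Borel) measure `μ` with a function `f`: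
`(μ * f)(x) = ∫_G f(y⁻¹ x) dμ(y)`. -/
noncomputable def mConv (μ : Measure G) (f : G → ℝ) : G → ℝ :=
  fun x => ∫ y, f (y⁻¹ * x) ∂μ

/-- Convolution of two functions with respect to a reference measure `m`:
`(φ * f)(x) = ∫_G φ(y) f(y⁻¹ x) dm(y)`. -/
noncomputable def fConv (m : Measure G) (φ f : G → ℝ) : G → ℝ :=
  fun x => ∫ y, φ y * f (y⁻¹ * x) ∂m

/-- A real-valued function is bounded. -/
def IsBdd (f : G → ℝ) : Prop := ∃ C : ℝ, ∀ x, |f x| ≤ C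

/-- `M₀₀(G)₊`: finite positive regular Borel measures with compact support. -/
def MComp (μ : Measure G) : Prop :=
  IsFiniteMeasure μ ∧ μ.Regular ∧ ∃ K : Set G, IsCompact K ∧ μ Kᶜ = 0

/-- `h` is `G`-dominated by `f`. -/
def GDom (f h : G → ℝ) : Prop :=
  ∃ (n : ℕ) (t : Fin n → ℝ) (g : Fin n → G),
    (∀ j, 0 ≤ t j) ∧ ∀ x, |h x| ≤ ∑ j, t j * f ((g j)⁻¹ * x)

/-- `h` is measurably dominated by `f`. -/
def MDom (f h : G → ℝ) : Prop :=
  ∃ μ : Measure G, MComp μ ∧ ∀ x, |h x| ≤ mConv μ f x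

/-- The `G`-dominated "norm" `p_f`. -/
noncomputable def pNorm (f h : G → ℝ) : ℝ :=
  sInf {s : ℝ | ∃ (n : ℕ) (t : Fin n → ℝ) (g : Fin n → G),
    (∀ j, 0 ≤ t j) ∧ (∀ x, |h x| ≤ ∑ j, t j * f ((g j)⁻¹ * x)) ∧ s = ∑ j, t j}

/-- The measurably dominated "norm" `p̄_f`. -/
noncomputable def pBar (f h : G → ℝ) : ℝ :=
  sInf {s : ℝ | ∃ μ : Measure G, MComp μ ∧ (∀ x, |h x| ≤ mConv μ f x) ∧
    s = (μ Set.univ).toReal}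

/-- Bounded right uniformly continuous real functions on `G`. -/
def RUCb (f : G → ℝ) : Prop :=
  IsBdd f ∧ Continuous f ∧
    ∀ ε : ℝ, 0 < ε → ∃ U ∈ 𝓝 (1 : G), ∀ g ∈ U, ∀ x, |f (g⁻¹ * x) - f x| < ε

/-- Bounded left uniformly continuous real functions on `G`. -/
def LUCb (f : G → ℝ) : Prop :=
  IsBdd f ∧ Continuous f ∧
    ∀ ε : ℝ, 0 < ε → ∃ U ∈ 𝓝 (1 : G), ∀ g ∈ U, ∀ x, |f (x * g) - f x| < ε

end Defs

/-!
A finite sum of point masses turns `G`-domination into measurable domination. Conversely, let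
`λ` be concentrated on a compact set `K` and pick `a` with `φ a > 0`. Finitely many translates of
the open set `{φ > φ a / 2}` cover the compact set `K * supp φ`, so every translate `φ(y⁻¹ ·)`
with `y ∈ K` is bounded by one fixed multiple of the sum of the corresponding translates of `φ`.
Convolving with `f ≥ 0` carries this bound over to the translates of `φ * f`, and integrating it
against `λ` bounds `λ * (φ * f)` by a single finite combination of translates of `φ * f`.
-/

namespace MeasureTheory.Measure

variable {X : Type*} [TopologicalSpace X] [T1Space X] [MeasurableSpace X]

lemma regular_of_measure_compl_finite_eq_zero (μ : Measure X) [IsFiniteMeasure μ] {S : Set X}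
    (hS : S.Finite) (hμS : μ Sᶜ = 0) : μ.Regular := by
  have hle {A B : Set X} (hAB : A \ B ⊆ Sᶜ) : μ A ≤ μ B :=
    measure_mono_ae (ae_le_set.2 (measure_mono_null hAB hμS))
  refine { outerRegular := fun A _ r hr => ?_, innerRegular := fun U _ r hr => ?_ }
  · exact ⟨(S \ A)ᶜ, fun _ hx hx' => hx'.2 hx, hS.sdiff.isClosed.isOpen_compl,
      (hle fun x (hx : x ∈ (S \ A)ᶜ \ A) hxS => hx.1 ⟨hxS, hx.2⟩).trans_lt hr⟩
  · exact ⟨U ∩ S, Set.inter_subset_left, (hS.subset Set.inter_subset_right).isCompact,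
      hr.trans_le (hle fun x (hx : x ∈ U \ (U ∩ S)) hxS => hx.2 ⟨hx.1, hxS⟩)⟩

end MeasureTheory.Measure

section Domination

variable [Group G]

lemma mConv_finset_sum_dirac [MeasurableSpace G] [MeasurableSingletonClass G] {ι : Type*}
    (s : Finset ι) (c : ι → NNReal) (g : ι → G) (F : G → ℝ) (x : G) :
    mConv (∑ j ∈ s, c j • Measure.dirac (g j)) F x = ∑ j ∈ s, c j * F ((g j)⁻¹ * x) := by
  rw [mConv, integral_finsetSum_measure fun j _ =>
    (integrable_dirac (by simp)).smul_measure_nnreal]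
  simp [integral_smul_nnreal_measure, integral_dirac, NNReal.smul_def]

theorem GDom.mDom [MeasurableSpace G] [TopologicalSpace G] [T1Space G] [OpensMeasurableSpace G]
    {F h : G → ℝ} (hh : GDom F h) : MDom F h := by
  obtain ⟨n, t, g, ht, hle⟩ := hh
  set μ : Measure G := ∑ j, (t j).toNNReal • Measure.dirac (g j)
  have hμ : μ (Set.range g)ᶜ = 0 := by simp [μ]
  refine ⟨μ, ⟨inferInstance, μ.regular_of_measure_compl_finite_eq_zero (Set.finite_range g) hμ,
    Set.range g, (Set.finite_range g).isCompact, hμ⟩, fun x => (hle x).trans_eq ?_⟩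
  rw [mConv_finset_sum_dirac]
  exact Finset.sum_congr rfl fun j _ => by rw [Real.coe_toNNReal _ (ht j)]

lemma gDom_of_le_mul_finset_sum {F h : G → ℝ} (s : Finset G) {C : ℝ} (hC : 0 ≤ C)
    (hh : ∀ x, |h x| ≤ C * ∑ b ∈ s, F (b⁻¹ * x)) : GDom F h := by
  refine ⟨s.card, fun _ => C, fun j => s.equivFin.symm j, fun _ => hC, fun x => (hh x).trans_eq ?_⟩
  rw [← Finset.mul_sum, ← Finset.sum_coe_sort s, ← Equiv.sum_comp s.equivFin.symm]

theorem MDom.gDom_of_translates_dominated [MeasurableSpace G] [TopologicalSpace G] {F h : G → ℝ}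
    (hF0 : ∀ x, 0 ≤ F x)
    (hF : ∀ K : Set G, IsCompact K → ∃ (s : Finset G) (C : ℝ), 0 ≤ C ∧
      ∀ y ∈ K, ∀ x, F (y⁻¹ * x) ≤ C * ∑ b ∈ s, F (b⁻¹ * x))
    (hh : MDom F h) : GDom F h := by
  obtain ⟨μ, ⟨hμ, -, K, hK, hKμ⟩, hhμ⟩ := hh
  obtain ⟨s, C, hC, hKs⟩ := hF K hK
  refine gDom_of_le_mul_finset_sum s (mul_nonneg (measureReal_nonneg (μ := μ) (s := Set.univ)) hC)
    fun x => (hhμ x).trans ?_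
  have hbound : ∀ᵐ y ∂μ, ‖F (y⁻¹ * x)‖ ≤ C * ∑ b ∈ s, F (b⁻¹ * x) := by
    filter_upwards [ae_iff.2 hKμ] with y hy
    rw [Real.norm_of_nonneg (hF0 _)]
    exact hKs y hy x
  calc mConv μ F x ≤ ‖mConv μ F x‖ := Real.le_norm_self _
    _ ≤ (C * ∑ b ∈ s, F (b⁻¹ * x)) * μ.real Set.univ := norm_integral_le_of_norm_le_const hbound
    _ = μ.real Set.univ * C * ∑ b ∈ s, F (b⁻¹ * x) := by ring

end Domination

section Covering

variable [Group G] [TopologicalSpace G] [IsTopologicalGroup G]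

lemma exists_finset_translates_dominate {φ : G → ℝ} (hφc : Continuous φ)
    (hφs : HasCompactSupport φ) (hφ0 : ∀ x, 0 ≤ φ x) (hφne : φ ≠ 0) {K : Set G}
    (hK : IsCompact K) :
    ∃ (s : Finset G) (C : ℝ), 0 ≤ C ∧ ∀ y ∈ K, ∀ w, φ (y⁻¹ * w) ≤ C * ∑ b ∈ s, φ (b⁻¹ * w) := by
  classical
  obtain ⟨a, ha⟩ := Function.ne_iff.1 hφne
  have hφa : 0 < φ a := (hφ0 a).lt_of_ne' ha
  obtain ⟨M, hM⟩ := hφc.bounded_above_of_compact_support hφs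
  have hφM : ∀ x, φ x ≤ M := fun x => (Real.le_norm_self _).trans (hM x)
  have hV : IsOpen {w | φ a / 2 < φ w} := isOpen_lt continuous_const hφc
  obtain ⟨t, ht⟩ := compact_covered_by_mul_left_translates (hK.mul hφs)
    (by rw [hV.interior_eq]; exact ⟨a, half_lt_self hφa⟩)
  have hC : 0 ≤ 2 * M / φ a := div_nonneg (by linarith [hφ0 a, hφM a]) hφa.le
  refine ⟨t⁻¹, 2 * M / φ a, hC, fun y hy w => ?_⟩
  have hsum : 0 ≤ ∑ b ∈ t⁻¹, φ (b⁻¹ * w) := Finset.sum_nonneg fun _ _ => hφ0 _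
  by_cases hw : y⁻¹ * w ∈ tsupport φ
  · obtain ⟨g, hg, hgw⟩ : ∃ g ∈ t, φ a / 2 < φ (g * w) := by
      simpa using ht (Set.mul_mem_mul hy hw)
    calc φ (y⁻¹ * w) ≤ 2 * M / φ a * (φ a / 2) := by field_simp; exact hφM _
      _ ≤ 2 * M / φ a * φ (g⁻¹⁻¹ * w) := by rw [inv_inv]; gcongr
      _ ≤ 2 * M / φ a * ∑ b ∈ t⁻¹, φ (b⁻¹ * w) := by
        gcongr
        exact Finset.single_le_sum (f := fun b => φ (b⁻¹ * w)) (fun _ _ => hφ0 _)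
          (Finset.inv_mem_inv hg)
  · rw [image_eq_zero_of_notMem_tsupport hw]
    exact mul_nonneg hC hsum

end Covering

section Convolution

variable [Group G] [MeasurableSpace G] {m : Measure G} {f φ ψ : G → ℝ}

lemma fConv_nonneg (hf0 : ∀ x, 0 ≤ f x) (hφ0 : ∀ x, 0 ≤ φ x) (x : G) : 0 ≤ fConv m φ f x :=
  integral_nonneg fun _ => mul_nonneg (hφ0 _) (hf0 _)

lemma fConv_inv_mul [MeasurableMul G] [m.IsMulLeftInvariant] (g x : G) :
    fConv m φ f (g⁻¹ * x) = fConv m (fun w => φ (g⁻¹ * w)) f x := by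
  rw [fConv, fConv, ← integral_mul_left_eq_self (fun w => φ (g⁻¹ * w) * f (w⁻¹ * x)) g]
  simp [mul_assoc]

variable [TopologicalSpace G] [IsTopologicalGroup G] [BorelSpace G]

lemma integrable_fConv_integrand [IsFiniteMeasureOnCompacts m] (hfm : Measurable f)
    (hfb : IsBdd f) (hφc : Continuous φ) (hφs : HasCompactSupport φ) (x : G) :
    Integrable (fun w => φ w * f (w⁻¹ * x)) m := by
  obtain ⟨C, hC⟩ := hfb
  exact (hφc.integrable_of_hasCompactSupport hφs).mul_bdd
    (hfm.comp (measurable_inv.mul_const x)).aestronglyMeasurable (ae_of_all _ fun w => hC _)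

lemma fConv_le_mul_finset_sum [m.IsMulLeftInvariant] [IsFiniteMeasureOnCompacts m]
    (hfm : Measurable f) (hfb : IsBdd f) (hf0 : ∀ x, 0 ≤ f x) (hφc : Continuous φ)
    (hφs : HasCompactSupport φ) (hψc : Continuous ψ) (hψs : HasCompactSupport ψ)
    {s : Finset G} {C : ℝ} (hψφ : ∀ w, ψ w ≤ C * ∑ b ∈ s, φ (b⁻¹ * w)) (x : G) :
    fConv m ψ f x ≤ C * ∑ b ∈ s, fConv m φ f (b⁻¹ * x) := by
  have hint : ∀ b, Integrable (fun w => φ (b⁻¹ * w) * f (w⁻¹ * x)) m := fun b =>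
    integrable_fConv_integrand hfm hfb (hφc.comp (continuous_const_mul _))
      (hφs.comp_homeomorph (Homeomorph.mulLeft b⁻¹)) x
  calc fConv m ψ f x ≤ ∫ w, C * ∑ b ∈ s, φ (b⁻¹ * w) * f (w⁻¹ * x) ∂m := by
        refine integral_mono (integrable_fConv_integrand hfm hfb hψc hψs x)
          ((integrable_finsetSum _ fun b _ => hint b).const_mul C) fun w => ?_
        rw [← Finset.sum_mul, ← mul_assoc]
        exact mul_le_mul_of_nonneg_right (hψφ w) (hf0 _)
    _ = C * ∑ b ∈ s, fConv m φ f (b⁻¹ * x) := by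
        rw [integral_const_mul, integral_finsetSum _ fun b _ => hint b]
        simp only [fConv_inv_mul]
        rfl

lemma fConv_translates_dominated [m.IsMulLeftInvariant] [IsFiniteMeasureOnCompacts m]
    (hfm : Measurable f) (hfb : IsBdd f) (hf0 : ∀ x, 0 ≤ f x) (hφc : Continuous φ)
    (hφs : HasCompactSupport φ) (hφ0 : ∀ x, 0 ≤ φ x) (hφne : φ ≠ 0) {K : Set G}
    (hK : IsCompact K) :
    ∃ (s : Finset G) (C : ℝ), 0 ≤ C ∧
      ∀ y ∈ K, ∀ x, fConv m φ f (y⁻¹ * x) ≤ C * ∑ b ∈ s, fConv m φ f (b⁻¹ * x) := by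
  obtain ⟨s, C, hC, hKs⟩ := exists_finset_translates_dominate hφc hφs hφ0 hφne hK
  refine ⟨s, C, hC, fun y hy x => ?_⟩
  rw [fConv_inv_mul]
  exact fConv_le_mul_finset_sum hfm hfb hf0 hφc hφs (hφc.comp (continuous_const_mul _))
    (hφs.comp_homeomorph (Homeomorph.mulLeft y⁻¹)) (hKs y hy) x

end Convolution

theorem statement_7_general [Group G] [TopologicalSpace G] [IsTopologicalGroup G]
    [T2Space G] [MeasurableSpace G] [BorelSpace G]
    (m : Measure G) [m.IsHaarMeasure]
    (f : G → ℝ) (hfm : Measurable f) (hfb : IsBdd f) (hf0 : ∀ x, 0 ≤ f x)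
    (φ : G → ℝ) (hφc : Continuous φ) (hφs : HasCompactSupport φ)
    (hφ0 : ∀ x, 0 ≤ φ x) (hφne : φ ≠ 0)
    (h : G → ℝ) :
    GDom (fConv m φ f) h ↔ MDom (fConv m φ f) h :=
  ⟨GDom.mDom, MDom.gDom_of_translates_dominated (fConv_nonneg hf0 hφ0) fun _ hK =>
    fConv_translates_dominated hfm hfb hf0 hφc hφs hφ0 hφne hK⟩

theorem statement_7 [Group G] [TopologicalSpace G] [IsTopologicalGroup G] [LocallyCompactSpace G]
    [T2Space G] [MeasurableSpace G] [BorelSpace G]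
    (m : Measure G) [m.IsHaarMeasure]
    (f : G → ℝ) (hfm : Measurable f) (hfb : IsBdd f) (hf0 : ∀ x, 0 ≤ f x)
    (φ : G → ℝ) (hφc : Continuous φ) (hφs : HasCompactSupport φ)
    (hφ0 : ∀ x, 0 ≤ φ x) (hφne : φ ≠ 0)
    (h : G → ℝ) :
    GDom (fConv m φ f) h ↔ MDom (fConv m φ f) h :=
  statement_7_general m f hfm hfb hf0 φ hφc hφs hφ0 hφne h
end

section
/- Let f ∈ C_ru^b(G) be nonnegative and not identically zero, let V = {h ∈ C_ru^b(G) : h is measurably dominated by f}, and let I : V → ℝ be additive and ℝ-homogeneous with I(h) ≥ 0 whenever h ≥ 0, I(f) = 1, and I(λ*h) = I(h) for every λ ∈ M^1_00(G) and h ∈ V. Then |I(h)| ≤ p̄_f(h) for every h ∈ V; that is, for every h ∈ V and every λ ∈ M_00(G)_+ with |h| ≤ λ*f one has |I(h)| ≤ λ(G). Consequently I is continuous with respect to the p̄_f-norm with operator norm equal to one. -/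
open MeasureTheory Topology Pointwise
open scoped ENNReal

variable {G : Type*}

/-!
Since `I` is positive and additive, `|h| ≤ μ * f` with `μ * f ∈ V` forces `|I h| ≤ I (μ * f)`.
Writing `μ = μ(G) • ν` with `ν` a probability measure, homogeneity and invariance give
`I (μ * f) = μ(G) I (ν * f) = μ(G) I f = μ(G)`.
-/

open Filter

theorem abs_le_of_forall_abs_le {X : Type*} {V : Set (X → ℝ)} {I : (X → ℝ) → ℝ}
    (hVadd : ∀ h ∈ V, ∀ v ∈ V, h + v ∈ V) (hVsmul : ∀ c : ℝ, ∀ h ∈ V, c • h ∈ V)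
    (Iadd : ∀ h ∈ V, ∀ v ∈ V, I (h + v) = I h + I v)
    (Ismul : ∀ c : ℝ, ∀ h ∈ V, I (c • h) = c * I h)
    (Ipos : ∀ h ∈ V, (∀ x, 0 ≤ h x) → 0 ≤ I h)
    {h F : X → ℝ} (hh : h ∈ V) (hF : F ∈ V) (hle : ∀ x, |h x| ≤ F x) : |I h| ≤ I F := by
  have hneg : (-1 : ℝ) • h ∈ V := hVsmul (-1) h hh
  have hplus : 0 ≤ I (F + h) := Ipos _ (hVadd F hF h hh) fun x => by
    simp only [Pi.add_apply]
    linarith [neg_abs_le (h x), hle x]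
  have hminus : 0 ≤ I (F + (-1 : ℝ) • h) := Ipos _ (hVadd F hF _ hneg) fun x => by
    simp only [Pi.add_apply, Pi.smul_apply, smul_eq_mul]
    linarith [le_abs_self (h x), hle x]
  rw [Iadd F hF h hh] at hplus
  rw [Iadd F hF _ hneg, Ismul (-1) h hh] at hminus
  exact abs_le.mpr ⟨by linarith, by linarith⟩

instance MeasureTheory.Measure.InnerRegular.dirac {α : Type*} [TopologicalSpace α]
    [MeasurableSpace α] (a : α) : (Measure.dirac a).InnerRegular := by
  refine ⟨fun s hs r hr => ⟨{a}, ?_, isCompact_singleton, ?_⟩⟩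
  · by_contra ha
    rw [Measure.dirac_apply' a hs, Set.indicator_of_notMem (by simpa using ha)] at hr
    exact ENNReal.not_lt_zero hr
  · rw [Measure.dirac_apply_of_mem (Set.mem_singleton a)]
    exact hr.trans_le prob_le_one

theorem IsBdd.add {f h : G → ℝ} (hf : IsBdd f) (hh : IsBdd h) : IsBdd (f + h) := by
  obtain ⟨C, hC⟩ := hf
  obtain ⟨D, hD⟩ := hh
  exact ⟨C + D, fun x => (abs_add_le _ _).trans (add_le_add (hC x) (hD x))⟩

theorem IsBdd.smul {f : G → ℝ} (c : ℝ) (hf : IsBdd f) : IsBdd (c • f) := by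
  obtain ⟨C, hC⟩ := hf
  refine ⟨|c| * C, fun x => ?_⟩
  simpa only [Pi.smul_apply, smul_eq_mul, abs_mul] using
    mul_le_mul_of_nonneg_left (hC x) (abs_nonneg c)

section MComp

variable [TopologicalSpace G] [MeasurableSpace G]

theorem MComp.smul {μ : Measure G} (hμ : MComp μ) {c : ℝ≥0∞} (hc : c ≠ ∞) : MComp (c • μ) := by
  obtain ⟨hf, hr, K, hK, hK0⟩ := hμ
  refine ⟨⟨?_⟩, hr.smul hc, K, hK, by simp [hK0]⟩
  rw [Measure.smul_apply, smul_eq_mul]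
  exact ENNReal.mul_lt_top hc.lt_top (measure_lt_top μ _)

variable [R1Space G] [BorelSpace G]

theorem MComp.add {μ ν : Measure G} (hμ : MComp μ) (hν : MComp ν) : MComp (μ + ν) := by
  obtain ⟨hμf, hμr, K₁, hK₁, hK₁0⟩ := hμ
  obtain ⟨hνf, hνr, K₂, hK₂, hK₂0⟩ := hν
  refine ⟨inferInstance, inferInstance, K₁ ∪ K₂, hK₁.union hK₂, ?_⟩
  rw [Measure.add_apply, Set.compl_union,
    measure_mono_null Set.inter_subset_left hK₁0, measure_mono_null Set.inter_subset_right hK₂0,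
    add_zero]

theorem mComp_dirac (a : G) : MComp (Measure.dirac a) := by
  refine ⟨inferInstance, inferInstance, closure {a}, isCompact_singleton.closure, ?_⟩
  rw [Measure.dirac_apply' _ isClosed_closure.isOpen_compl.measurableSet,
    Set.indicator_of_notMem (Set.notMem_compl_iff.mpr (subset_closure (Set.mem_singleton a)))]

theorem MComp.exists_prob_eq_smul [Nonempty G] {μ : Measure G}
    (hμ : MComp μ) : ∃ ν : Measure G, MComp ν ∧ ν Set.univ = 1 ∧ ∃ c : ℝ≥0∞, μ = c • ν := by
  have := hμ.1
  by_cases h0 : μ = 0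
  · exact ⟨_, mComp_dirac (Classical.arbitrary G), measure_univ, 0, by simp [h0]⟩
  have hμ0 : μ Set.univ ≠ 0 := Measure.measure_univ_ne_zero.mpr h0
  have hμtop : μ Set.univ ≠ ∞ := measure_ne_top μ _
  refine ⟨(μ Set.univ)⁻¹ • μ, hμ.smul (ENNReal.inv_ne_top.mpr hμ0), ?_, μ Set.univ, ?_⟩
  · rw [Measure.smul_apply, smul_eq_mul, ENNReal.inv_mul_cancel hμ0 hμtop]
  · rw [smul_smul, ENNReal.mul_inv_cancel hμ0 hμtop, one_smul]

end MComp

section Convolution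

variable [Group G] [MeasurableSpace G]

theorem mConv_smul_measure (c : ℝ≥0∞) (μ : Measure G) (f : G → ℝ) :
    mConv (c • μ) f = c.toReal • mConv μ f :=
  funext fun _ => integral_smul_measure _ c

theorem mConv_nonneg {f : G → ℝ} (hf0 : ∀ x, 0 ≤ f x) (μ : Measure G) (x : G) :
    0 ≤ mConv μ f x :=
  integral_nonneg fun _ => hf0 _

theorem IsBdd.mConv {f : G → ℝ} (hf : IsBdd f) (μ : Measure G) [IsFiniteMeasure μ] :
    IsBdd (mConv μ f) := by
  obtain ⟨C, hC⟩ := hf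
  refine ⟨C * μ.real Set.univ, fun x => ?_⟩
  have hx := norm_integral_le_of_norm_le_const (μ := μ) (f := fun y => f (y⁻¹ * x))
    (Eventually.of_forall fun y => by simpa only [Real.norm_eq_abs] using hC (y⁻¹ * x))
  rwa [Real.norm_eq_abs] at hx

end Convolution

def IsRightUnifCont [Group G] [TopologicalSpace G] (f : G → ℝ) : Prop :=
  ∀ ε : ℝ, 0 < ε → ∃ U ∈ 𝓝 (1 : G), ∀ g ∈ U, ∀ x, |f (g⁻¹ * x) - f x| < ε

section Group

variable [Group G] [TopologicalSpace G]

theorem IsRightUnifCont.add {f h : G → ℝ} (hf : IsRightUnifCont f) (hh : IsRightUnifCont h) :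
    IsRightUnifCont (f + h) := fun ε hε => by
  obtain ⟨U₁, hU₁, hf'⟩ := hf (ε / 2) (by linarith)
  obtain ⟨U₂, hU₂, hh'⟩ := hh (ε / 2) (by linarith)
  refine ⟨U₁ ∩ U₂, inter_mem hU₁ hU₂, fun g hg x => ?_⟩
  calc |(f + h) (g⁻¹ * x) - (f + h) x|
      = |(f (g⁻¹ * x) - f x) + (h (g⁻¹ * x) - h x)| := by simp only [Pi.add_apply]; ring_nf
    _ ≤ |f (g⁻¹ * x) - f x| + |h (g⁻¹ * x) - h x| := abs_add_le _ _
    _ < ε := by linarith [hf' g hg.1 x, hh' g hg.2 x]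

theorem IsRightUnifCont.smul {f : G → ℝ} (c : ℝ) (hf : IsRightUnifCont f) :
    IsRightUnifCont (c • f) := fun ε hε => by
  obtain ⟨U, hU, hf'⟩ := hf (ε / (|c| + 1)) (by positivity)
  refine ⟨U, hU, fun g hg x => ?_⟩
  calc |(c • f) (g⁻¹ * x) - (c • f) x| = |c| * |f (g⁻¹ * x) - f x| := by
        simp only [Pi.smul_apply, smul_eq_mul, ← mul_sub, abs_mul]
    _ ≤ |c| * (ε / (|c| + 1)) := mul_le_mul_of_nonneg_left (hf' g hg x).le (abs_nonneg c)
    _ < ε := by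
        rw [mul_div_assoc', div_lt_iff₀ (by positivity)]
        nlinarith [abs_nonneg c]

theorem RUCb.add {f h : G → ℝ} (hf : RUCb f) (hh : RUCb h) : RUCb (f + h) :=
  ⟨hf.1.add hh.1, hf.2.1.add hh.2.1, IsRightUnifCont.add hf.2.2 hh.2.2⟩

theorem RUCb.smul {f : G → ℝ} (c : ℝ) (hf : RUCb f) : RUCb (c • f) :=
  ⟨hf.1.smul c, hf.2.1.const_smul c, IsRightUnifCont.smul c hf.2.2⟩

variable [MeasurableSpace G]

theorem MDom.smul {f h : G → ℝ} (c : ℝ) (hh : MDom f h) : MDom f (c • h) := by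
  obtain ⟨μ, hμ, hμh⟩ := hh
  refine ⟨ENNReal.ofReal |c| • μ, hμ.smul ENNReal.ofReal_ne_top, fun x => ?_⟩
  rw [mConv_smul_measure, ENNReal.toReal_ofReal (abs_nonneg c)]
  simpa only [Pi.smul_apply, smul_eq_mul, abs_mul] using
    mul_le_mul_of_nonneg_left (hμh x) (abs_nonneg c)

theorem mDom_mConv {f : G → ℝ} (hf0 : ∀ x, 0 ≤ f x) {μ : Measure G} (hμ : MComp μ) :
    MDom f (mConv μ f) :=
  ⟨μ, hμ, fun x => (abs_of_nonneg (mConv_nonneg hf0 μ x)).le⟩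

end Group

section TopologicalGroup

variable [Group G] [TopologicalSpace G] [IsTopologicalGroup G]

theorem IsCompact.eventually_forall_conj_mem {K W : Set G} (hK : IsCompact K)
    (hW : W ∈ 𝓝 (1 : G)) : ∀ᶠ g in 𝓝 (1 : G), ∀ y ∈ K, y⁻¹ * g * y ∈ W :=
  hK.eventually_forall_of_forall_eventually fun y _ => by
    have hconj : Continuous fun z : G × G => z.2⁻¹ * z.1 * z.2 := by fun_prop
    exact hconj.tendsto (1, y) (by simpa using hW)

theorem IsRightUnifCont.continuous {f : G → ℝ} (hf : IsRightUnifCont f) : Continuous f := by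
  refine continuous_iff_continuousAt.mpr fun x₀ => Metric.tendsto_nhds.mpr fun ε hε => ?_
  obtain ⟨U, hU, hUf⟩ := hf ε hε
  have hshift : Continuous fun x : G => x₀ * x⁻¹ := by fun_prop
  filter_upwards [hshift.tendsto x₀ (by simpa using hU)] with x hx
  have hx₀ : (x₀ * x⁻¹)⁻¹ * x₀ = x := by group
  simpa [hx₀, Real.dist_eq] using hUf _ hx x₀

variable [MeasurableSpace G] [BorelSpace G]

theorem integrable_comp_inv_mul {f : G → ℝ} (hb : IsBdd f) (hc : Continuous f)
    (μ : Measure G) [IsFiniteMeasure μ] (x : G) : Integrable (fun y => f (y⁻¹ * x)) μ := by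
  obtain ⟨C, hC⟩ := hb
  have hcx : Continuous fun y => f (y⁻¹ * x) := by fun_prop
  refine (integrable_const C).mono' hcx.aestronglyMeasurable (Eventually.of_forall fun y => ?_)
  simpa only [Real.norm_eq_abs] using hC (y⁻¹ * x)

theorem mConv_add_measure {f : G → ℝ} (hb : IsBdd f) (hc : Continuous f) (μ ν : Measure G)
    [IsFiniteMeasure μ] [IsFiniteMeasure ν] : mConv (μ + ν) f = mConv μ f + mConv ν f :=
  funext fun x => integral_add_measure (integrable_comp_inv_mul hb hc μ x)
    (integrable_comp_inv_mul hb hc ν x)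

theorem mConv_dirac_one {f : G → ℝ} (hc : Continuous f) : mConv (Measure.dirac 1) f = f :=
  funext fun x => by
    have hcx : Continuous fun y => f (y⁻¹ * x) := by fun_prop
    rw [mConv, integral_dirac' _ _ hcx.stronglyMeasurable, inv_one, one_mul]

theorem RUCb.isRightUnifCont_mConv {f : G → ℝ} (hf : RUCb f) {μ : Measure G} (hμ : MComp μ) :
    IsRightUnifCont (mConv μ f) := by
  obtain ⟨hb, hc, hru⟩ := hf
  obtain ⟨hfin, -, K, hK, hK0⟩ := hμ
  intro ε hε
  set M := μ.real Set.univ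
  have hM : 0 ≤ M := measureReal_nonneg
  obtain ⟨U₀, hU₀, hfU₀⟩ := hru (ε / (M + 1)) (by positivity)
  refine ⟨_, hK.eventually_forall_conj_mem hU₀, fun g hg x => ?_⟩
  have hsub : mConv μ f (g⁻¹ * x) - mConv μ f x = ∫ y, (f (y⁻¹ * (g⁻¹ * x)) - f (y⁻¹ * x)) ∂μ :=
    (integral_sub (integrable_comp_inv_mul hb hc μ _) (integrable_comp_inv_mul hb hc μ _)).symm
  have hbound : |mConv μ f (g⁻¹ * x) - mConv μ f x| ≤ ε / (M + 1) * M := by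
    rw [hsub, ← Real.norm_eq_abs]
    refine norm_integral_le_of_norm_le_const ?_
    filter_upwards [measure_eq_zero_iff_ae_notMem.mp hK0] with y hy
    -- `g⁻¹` acts on `y⁻¹ * x` through the conjugate `y⁻¹ * g * y`, which is small uniformly on `K`
    have hconj : y⁻¹ * (g⁻¹ * x) = (y⁻¹ * g * y)⁻¹ * (y⁻¹ * x) := by group
    rw [Real.norm_eq_abs, hconj]
    exact (hfU₀ _ (hg y (by simpa using hy)) _).le
  refine hbound.trans_lt ?_
  rw [div_mul_eq_mul_div, div_lt_iff₀ (by positivity)]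
  linarith

theorem RUCb.mConv {f : G → ℝ} (hf : RUCb f) {μ : Measure G} (hμ : MComp μ) :
    RUCb (mConv μ f) :=
  have := hμ.1
  have hru := hf.isRightUnifCont_mConv hμ
  ⟨hf.1.mConv μ, hru.continuous, hru⟩

theorem MDom.add {f h v : G → ℝ} (hb : IsBdd f) (hc : Continuous f) (hh : MDom f h)
    (hv : MDom f v) : MDom f (h + v) := by
  obtain ⟨μ, hμ, hμh⟩ := hh
  obtain ⟨ν, hν, hνv⟩ := hv
  have := hμ.1
  have := hν.1
  refine ⟨μ + ν, hμ.add hν, fun x => ?_⟩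
  rw [mConv_add_measure hb hc]
  exact (abs_add_le _ _).trans (add_le_add (hμh x) (hνv x))

end TopologicalGroup

theorem statement_12_general [Group G] [TopologicalSpace G] [IsTopologicalGroup G]
    [MeasurableSpace G] [BorelSpace G]
    (f : G → ℝ) (hf : RUCb f) (hf0 : ∀ x, 0 ≤ f x)
    (V : Set (G → ℝ)) (hV : V = {h : G → ℝ | RUCb h ∧ MDom f h})
    (I : (G → ℝ) → ℝ)
    (Iadd : ∀ h ∈ V, ∀ v ∈ V, I (h + v) = I h + I v)
    (Ismul : ∀ c : ℝ, ∀ h ∈ V, I (c • h) = c * I h)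
    (Ipos : ∀ h ∈ V, (∀ x, 0 ≤ h x) → 0 ≤ I h)
    (Inorm : I f = 1)
    (Iinv : ∀ μ : Measure G, MComp μ → μ Set.univ = 1 →
      ∀ h ∈ V, I (mConv μ h) = I h) :
    (∀ h ∈ V, ∀ μ : Measure G, MComp μ → (∀ x, |h x| ≤ mConv μ f x) →
      |I h| ≤ (μ Set.univ).toReal) ∧
    (∀ h ∈ V, |I h| ≤ pBar f h) := by
  subst hV
  set V : Set (G → ℝ) := {h : G → ℝ | RUCb h ∧ MDom f h}
  have hVadd : ∀ h ∈ V, ∀ v ∈ V, h + v ∈ V :=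
    fun h hh v hv => ⟨hh.1.add hv.1, hh.2.add hf.1 hf.2.1 hv.2⟩
  have hVsmul : ∀ c : ℝ, ∀ h ∈ V, c • h ∈ V := fun c h hh => ⟨hh.1.smul c, hh.2.smul c⟩
  have hconvV : ∀ μ, MComp μ → mConv μ f ∈ V := fun μ hμ => ⟨hf.mConv hμ, mDom_mConv hf0 hμ⟩
  have hfV : f ∈ V := mConv_dirac_one hf.2.1 ▸ hconvV _ (mComp_dirac 1)
  have hIconv : ∀ μ, MComp μ → I (mConv μ f) = (μ Set.univ).toReal := by
    intro μ hμ
    obtain ⟨ν, hν, hν1, c, rfl⟩ := hμ.exists_prob_eq_smul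
    rw [mConv_smul_measure, Ismul _ _ (hconvV ν hν), Iinv ν hν hν1 f hfV, Inorm,
      Measure.smul_apply, hν1, smul_eq_mul, mul_one, mul_one]
  have hbound : ∀ h ∈ V, ∀ μ, MComp μ → (∀ x, |h x| ≤ mConv μ f x) →
      |I h| ≤ (μ Set.univ).toReal := fun h hh μ hμ hdom =>
    hIconv μ hμ ▸ abs_le_of_forall_abs_le hVadd hVsmul Iadd Ismul Ipos hh (hconvV μ hμ) hdom
  refine ⟨hbound, fun h hh => ?_⟩
  obtain ⟨μ, hμ, hdom⟩ := hh.2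
  exact le_csInf ⟨_, μ, hμ, hdom, rfl⟩ fun _ ⟨ν, hν, hνdom, hs⟩ => hs ▸ hbound h hh ν hν hνdom

theorem statement_12 [Group G] [TopologicalSpace G] [IsTopologicalGroup G] [LocallyCompactSpace G]
    [T2Space G] [MeasurableSpace G] [BorelSpace G]
    (f : G → ℝ) (hf : RUCb f) (hf0 : ∀ x, 0 ≤ f x) (hfne : f ≠ 0)
    (V : Set (G → ℝ)) (hV : V = {h : G → ℝ | RUCb h ∧ MDom f h})
    (I : (G → ℝ) → ℝ)
    (Iadd : ∀ h ∈ V, ∀ v ∈ V, I (h + v) = I h + I v)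
    (Ismul : ∀ c : ℝ, ∀ h ∈ V, I (c • h) = c * I h)
    (Ipos : ∀ h ∈ V, (∀ x, 0 ≤ h x) → 0 ≤ I h)
    (Inorm : I f = 1)
    (Iinv : ∀ μ : Measure G, MComp μ → μ Set.univ = 1 →
      ∀ h ∈ V, I (mConv μ h) = I h) :
    (∀ h ∈ V, ∀ μ : Measure G, MComp μ → (∀ x, |h x| ≤ mConv μ f x) →
      |I h| ≤ (μ Set.univ).toReal) ∧
    (∀ h ∈ V, |I h| ≤ pBar f h) :=
  statement_12_general f hf hf0 V hV I Iadd Ismul Ipos Inorm Iinv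
end
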